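/- arXiv:1811.05923 — 3 statements merged into one kernel-verified Lean document; each statement's English description precedes it below -/
import Mathlib

section
/- Let μ : ℝ → ℝ be continuous and define π(a) := exp(−∫₀ᵃ μ(h) dh). Let n₀ : ℝ → ℝ be differentiable and ν : ℝ × ℝ → ℝ be continuously differentiable. Define, on the region {(t,a) : 0 ≤ t ≤ a}, n(t,a) := π(a) · ( n₀(a−t)/π(a−t) + ∫_{a−t}^{a} ν(τ + t − a, τ)/π(τ) dτ ). Then n satisfies (∂/∂t + ∂/∂a) n(t,a) = ν(t,a) − μ(a) n(t,a) at every interior point of this region, and n(0,a) = n₀(a) for all a ≥ 0. -/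
/-!
Along a characteristic `s ↦ (t + s, a + s)` the age at birth `a - t` is constant, so the formula
becomes `x ↦ π x * (C + ∫_{a-t}^x ν(·)/π)` evaluated at `x = a + s`. Since `π' = -μ π`, the
product rule and the fundamental theorem of calculus give the derivative `-μ n + ν`; this is the
variation-of-constants formula for the linear ODE along the characteristic.
-/

open Filter Topology

theorem hasDerivAt_exp_neg_integral {μ : ℝ → ℝ} (hμ : Continuous μ) (a : ℝ) :
    HasDerivAt (fun x => Real.exp (-∫ h in (0:ℝ)..x, μ h))
      (-μ a * Real.exp (-∫ h in (0:ℝ)..a, μ h)) a := by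
  simpa [mul_comm] using (hμ.integral_hasStrictDerivAt 0 a).hasDerivAt.neg.exp

theorem hasDerivAt_mul_const_add_integral {S G : ℝ → ℝ} {S' : ℝ} {x : ℝ}
    (hS : HasDerivAt S S' x) (hG : Continuous G) (C b : ℝ) :
    HasDerivAt (fun y => S y * (C + ∫ τ in b..y, G τ))
      (S' * (C + ∫ τ in b..x, G τ) + S x * G x) x :=
  hS.mul ((hG.integral_hasStrictDerivAt b x).hasDerivAt.const_add C)

theorem eventually_add_diagonal_mem_of_mem_interior {s : Set (ℝ × ℝ)} {p : ℝ × ℝ}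
    (hp : p ∈ interior s) : ∀ᶠ r in 𝓝 (0:ℝ), (p.1 + r, p.2 + r) ∈ s := by
  have hcont : ContinuousAt (fun r : ℝ => (p.1 + r, p.2 + r)) 0 := by fun_prop
  exact hcont.preimage_mem_nhds (by simpa using mem_interior_iff_mem_nhds.mp hp)

theorem hasDerivAt_characteristic_of_eq_formula {μ S : ℝ → ℝ} {n₀ : ℝ → ℝ} {ν n : ℝ × ℝ → ℝ}
    (hS : ∀ a, HasDerivAt S (-μ a * S a) a) (hS0 : ∀ a, S a ≠ 0) (hν : Continuous ν)
    (hn : ∀ t a : ℝ, 0 ≤ t → t ≤ a →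
      n (t, a) = S a * (n₀ (a - t) / S (a - t) + ∫ τ in (a - t)..a, ν (τ + t - a, τ) / S τ))
    {p : ℝ × ℝ} (hp : p ∈ interior {q : ℝ × ℝ | 0 ≤ q.1 ∧ q.1 ≤ q.2}) :
    HasDerivAt (fun s => n (p.1 + s, p.2 + s)) (ν p - μ p.2 * n p) 0 := by
  obtain ⟨t, a⟩ := p
  set C := n₀ (a - t) / S (a - t)
  set G : ℝ → ℝ := fun τ => ν (τ + t - a, τ) / S τ
  have hG : Continuous G :=
    (hν.comp (by fun_prop)).div (continuous_iff_continuousAt.2 fun x => (hS x).continuousAt) hS0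
  have hchar : (fun s => n (t + s, a + s)) =ᶠ[𝓝 0]
      fun s => S (a + s) * (C + ∫ τ in (a - t)..(a + s), G τ) := by
    filter_upwards [eventually_add_diagonal_mem_of_mem_interior hp] with s ⟨hts, hsa⟩
    rw [hn _ _ hts hsa, show a + s - (t + s) = a - t by ring]
    congr 3 with τ
    simp only [G]
    ring_nf
  obtain ⟨ht, hta⟩ := interior_subset hp
  have hna : n (t, a) = S a * (C + ∫ τ in (a - t)..a, G τ) := hn t a ht hta
  have hGa : S a * G a = ν (t, a) := by simp [G, mul_div_cancel₀ _ (hS0 a)]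
  have hderiv : HasDerivAt (fun x => S x * (C + ∫ τ in (a - t)..x, G τ))
      (-μ a * S a * (C + ∫ τ in (a - t)..a, G τ) + S a * G a) (a + 0) := by
    rw [add_zero]
    exact hasDerivAt_mul_const_add_integral (hS a) hG C (a - t)
  show HasDerivAt (fun s => n (t + s, a + s)) _ 0
  refine (hderiv.comp_const_add a 0).congr_of_eventuallyEq hchar |>.congr_deriv ?_
  rw [hna, hGa]
  ring

theorem characteristics_solution_below_diagonal_general
    (μ : ℝ → ℝ) (hμ : Continuous μ)
    (surv : ℝ → ℝ) (hsurv : ∀ a, surv a = Real.exp (-∫ h in (0:ℝ)..a, μ h))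
    (n₀ : ℝ → ℝ)
    (ν : ℝ × ℝ → ℝ) (hν : ContDiff ℝ 1 ν)
    (n : ℝ × ℝ → ℝ)
    (hn : ∀ t a : ℝ, 0 ≤ t → t ≤ a →
      n (t, a) = surv a * (n₀ (a - t) / surv (a - t) +
        ∫ τ in (a - t)..a, ν (τ + t - a, τ) / surv τ)) :
    (∀ p : ℝ × ℝ, p ∈ interior {q : ℝ × ℝ | 0 ≤ q.1 ∧ q.1 ≤ q.2} →
      HasDerivAt (fun s => n (p.1 + s, p.2 + s)) (ν p - μ p.2 * n p) 0) ∧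
    (∀ a : ℝ, 0 ≤ a → n (0, a) = n₀ a) := by
  obtain rfl : surv = fun x => Real.exp (-∫ h in (0:ℝ)..x, μ h) := funext hsurv
  have hsurv0 : ∀ a, Real.exp (-∫ h in (0:ℝ)..a, μ h) ≠ 0 := fun a => (Real.exp_pos _).ne'
  refine ⟨fun p hp => hasDerivAt_characteristic_of_eq_formula (hasDerivAt_exp_neg_integral hμ)
    hsurv0 hν.continuous hn hp, fun a ha => ?_⟩
  rw [hn 0 a le_rfl ha, sub_zero, intervalIntegral.integral_same, add_zero,
    mul_div_cancel₀ _ (hsurv0 a)]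

/-- The method-of-characteristics formula
n(t,a) = π(a) ( n₀(a−t)/π(a−t) + ∫_{a−t}^a ν(τ+t−a, τ)/π(τ) dτ ), with
π(a) = exp(−∫₀ᵃ μ), solves (∂/∂t + ∂/∂a) n = ν − μ n at every interior point of
the region {(t,a) : 0 ≤ t ≤ a}, and satisfies n(0,a) = n₀(a) for a ≥ 0. -/
theorem characteristics_solution_below_diagonal
    (μ : ℝ → ℝ) (hμ : Continuous μ)
    (surv : ℝ → ℝ) (hsurv : ∀ a, surv a = Real.exp (-∫ h in (0:ℝ)..a, μ h))
    (n₀ : ℝ → ℝ) (hn₀ : Differentiable ℝ n₀)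
    (ν : ℝ × ℝ → ℝ) (hν : ContDiff ℝ 1 ν)
    (n : ℝ × ℝ → ℝ)
    (hn : ∀ t a : ℝ, 0 ≤ t → t ≤ a →
      n (t, a) = surv a * (n₀ (a - t) / surv (a - t) +
        ∫ τ in (a - t)..a, ν (τ + t - a, τ) / surv τ)) :
    (∀ p : ℝ × ℝ, p ∈ interior {q : ℝ × ℝ | 0 ≤ q.1 ∧ q.1 ≤ q.2} →
      HasDerivAt (fun s => n (p.1 + s, p.2 + s)) (ν p - μ p.2 * n p) 0) ∧
    (∀ a : ℝ, 0 ≤ a → n (0, a) = n₀ a) :=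
  characteristics_solution_below_diagonal_general μ hμ surv hsurv n₀ ν hν n hn
end

section
/- Let μ : ℝ → ℝ be continuous, π(a) := exp(−∫₀ᵃ μ(h) dh), let ν : ℝ × ℝ → ℝ be continuous, n₀ : ℝ → ℝ continuous, and G : ℝ → ℝ continuous. Define the piecewise function n(t,a) := π(a)·( n₀(a−t)/π(a−t) + ∫_{a−t}^{a} ν(τ+t−a, τ)/π(τ) dτ ) for t ≤ a, and n(t,a) := π(a)·( G(t−a) + ∫₀ᵃ ν(τ+t−a, τ)/π(τ) dτ ) for t > a. If the compatibility condition n₀(0) = G(0) holds, then the two branches agree on the diagonal t = a, and n is continuous on {(t,a) : t ≥ 0, a ≥ 0}. -/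
/-! Each branch is continuous on the whole plane: the survival function `π` is continuous and
positive, and an interval integral of a jointly continuous integrand is continuous in the
parameter and in both endpoints. On the diagonal `t = a` the branches differ only through
`n₀ 0 / π 0` versus `G 0`, and `π 0 = 1`, so the compatibility condition glues them. -/

open MeasureTheory

theorem intervalIntegral.continuous_parametric_intervalIntegral_of_continuous_bounds
    {X E : Type*} [TopologicalSpace X] [NormedAddCommGroup E] [NormedSpace ℝ E]
    {μ : Measure ℝ} [IsLocallyFiniteMeasure μ] [NullSingletonClass μ]
    {f : X → ℝ → E} (hf : Continuous f.uncurry)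
    {a b : X → ℝ} (ha : Continuous a) (hb : Continuous b) :
    Continuous fun x ↦ ∫ t in a x..b x, f x t ∂μ := by
  have hint : ∀ x c d, IntervalIntegrable (f x) μ c d := fun x _ _ ↦
    (hf.uncurry_left x).intervalIntegrable _ _
  have hsub : ∀ x, ∫ t in a x..b x, f x t ∂μ =
      (∫ t in 0..b x, f x t ∂μ) - ∫ t in 0..a x, f x t ∂μ :=
    fun x ↦ (integral_interval_sub_left (hint x _ _) (hint x _ _)).symm
  simp only [hsub]
  exact (continuous_parametric_intervalIntegral_of_continuous hf hb).sub
    (continuous_parametric_intervalIntegral_of_continuous hf ha)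

theorem continuous_exp_neg_intervalIntegral {μ : ℝ → ℝ} (hμ : Continuous μ) :
    Continuous fun a ↦ Real.exp (-∫ h in (0:ℝ)..a, μ h) :=
  (intervalIntegral.continuous_primitive (fun _ _ ↦ hμ.intervalIntegrable _ _) 0).neg.rexp

/-- If the compatibility condition n₀(0) = G(0) holds, the two branches
of the piecewise method-of-characteristics solution agree on the diagonal t = a, and
the piecewise function n is continuous on the quadrant {(t,a) : t ≥ 0, a ≥ 0}. -/
theorem piecewise_solution_continuous
    (μ : ℝ → ℝ) (hμ : Continuous μ)
    (surv : ℝ → ℝ) (hsurv : ∀ a, surv a = Real.exp (-∫ h in (0:ℝ)..a, μ h))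
    (ν : ℝ × ℝ → ℝ) (hν : Continuous ν)
    (n₀ : ℝ → ℝ) (hn₀ : Continuous n₀)
    (G : ℝ → ℝ) (hG : Continuous G)
    (n : ℝ × ℝ → ℝ)
    (hn : ∀ t a : ℝ, n (t, a) =
      if t ≤ a then
        surv a * (n₀ (a - t) / surv (a - t) +
          ∫ τ in (a - t)..a, ν (τ + t - a, τ) / surv τ)
      else
        surv a * (G (t - a) + ∫ τ in (0:ℝ)..a, ν (τ + t - a, τ) / surv τ))
    (hcompat : n₀ 0 = G 0) :
    (∀ a : ℝ,
      surv a * (n₀ 0 / surv 0 + ∫ τ in (0:ℝ)..a, ν (τ, τ) / surv τ) =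
      surv a * (G 0 + ∫ τ in (0:ℝ)..a, ν (τ, τ) / surv τ)) ∧
    ContinuousOn n {p : ℝ × ℝ | 0 ≤ p.1 ∧ 0 ≤ p.2} := by
  have hsurv0 : surv 0 = 1 := by simp [hsurv]
  have hsurv_ne : ∀ a, surv a ≠ 0 := fun a ↦ hsurv a ▸ (Real.exp_pos _).ne'
  have hsurv_cont : Continuous surv := funext hsurv ▸ continuous_exp_neg_intervalIntegral hμ
  have hintegrand :
      Continuous fun p : (ℝ × ℝ) × ℝ ↦ ν (p.2 + p.1.1 - p.1.2, p.2) / surv p.2 :=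
    (hν.comp (by fun_prop)).div (hsurv_cont.comp continuous_snd) fun _ ↦ hsurv_ne _
  have hint : ∀ {a b : ℝ × ℝ → ℝ}, Continuous a → Continuous b →
      Continuous fun x : ℝ × ℝ ↦ ∫ τ in a x..b x, ν (τ + x.1 - x.2, τ) / surv τ :=
    intervalIntegral.continuous_parametric_intervalIntegral_of_continuous_bounds hintegrand
  refine ⟨fun a ↦ by rw [hsurv0, div_one, hcompat], ?_⟩
  rw [show n = _ from funext fun x : ℝ × ℝ ↦ hn x.1 x.2]
  refine (Continuous.if_le ?_ ?_ continuous_fst continuous_snd fun x hx ↦ ?_).continuousOn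
  · exact (hsurv_cont.comp continuous_snd).mul
      (((hn₀.comp (by fun_prop)).div (hsurv_cont.comp (by fun_prop)) fun _ ↦ hsurv_ne _).add
        (hint (by fun_prop) continuous_snd))
  · exact (hsurv_cont.comp continuous_snd).mul
      ((hG.comp (by fun_prop)).add (hint continuous_const continuous_snd))
  · simp [hx, hsurv0, hcompat]
end

section
/- Let μ : ℝ → ℝ be continuous with μ ≥ 0 on [0,∞), π(a) := exp(−∫₀ᵃ μ(h) dh), let f : ℝ → ℝ be a continuous nonnegative fertility function vanishing for large a (compactly supported in [0,∞)), ν : ℝ × ℝ → ℝ continuous and compactly supported, n₀ : ℝ → ℝ continuous and compactly supported in [0,∞), and let G : [0,∞) → ℝ be continuous. Suppose n(t,a) is defined by n(t,a) = π(a)·( n₀(a−t)/π(a−t) + ∫_{a−t}^{a} ν(τ+t−a,τ)/π(τ) dτ ) for t ≤ a and n(t,a) = π(a)·( G(t−a) + ∫₀ᵃ ν(τ+t−a,τ)/π(τ) dτ ) for t > a, and that G(t) = ∫₀^∞ f(a) n(t,a) da for all t ≥ 0. Then G satisfies the Volterra integral equation G(t) = ∫₀ᵗ G(t−a) K(a)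 da + H(t), where K(a) := f(a) π(a) and H(t) := ∫₀ᵗ ∫₀ᵃ f(a) (π(a)/π(τ)) ν(τ+t−a, τ) dτ da + ∫_t^∞ ∫_{a−t}^{a} f(a) (π(a)/π(τ)) ν(τ+t−a, τ) dτ da + ∫_t^∞ f(a) (π(a)/π(a−t)) n₀(a−t) da. -/
/-!
Split the age integral `G t = ∫₀^∞ f a n(t,a) da` at `a = t`. Mothers younger than `t` were born
after time `0`, so along their characteristic `n(t,a) = π(a) (G(t-a) + ∫₀ᵃ ν/π)`: this gives the
convolution `∫₀ᵗ G(t-a) K(a) da` and the first immigration term. Mothers of age at least `t` were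
already present at time `0`, so `n(t,a) = π(a) (n₀(a-t)/π(a-t) + ∫_{a-t}^a ν/π)`: this gives the
remaining two terms of `H t`. The compact support of `f` makes all the pieces integrable.
-/

open MeasureTheory Set

theorem intervalIntegral.continuous_parametric_intervalIntegral_of_continuous_of_continuous
    {X E : Type*} [TopologicalSpace X] [NormedAddCommGroup E] [NormedSpace ℝ E]
    {F : X → ℝ → E} (hF : Continuous F.uncurry) {u v : X → ℝ} (hu : Continuous u)
    (hv : Continuous v) : Continuous fun x => ∫ τ in u x..v x, F x τ := by
  have hFx (x : X) : Continuous (F x) := hF.comp (Continuous.prodMk_right x)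
  have h_sub (x : X) : ∫ τ in u x..v x, F x τ = (∫ τ in 0..v x, F x τ) - ∫ τ in 0..u x, F x τ :=
    (intervalIntegral.integral_interval_sub_left ((hFx x).intervalIntegrable _ _)
      ((hFx x).intervalIntegrable _ _)).symm
  simp_rw [h_sub]
  exact (continuous_parametric_intervalIntegral_of_continuous hF hv).sub
    (continuous_parametric_intervalIntegral_of_continuous hF hu)

theorem mul_mul_add_intervalIntegral_div (c s x : ℝ) (φ ψ : ℝ → ℝ) (u v : ℝ) :
    c * (s * (x + ∫ τ in u..v, φ τ / ψ τ)) = c * s * x + ∫ τ in u..v, c * (s / ψ τ) * φ τ := by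
  rw [mul_add, mul_add, ← mul_assoc, ← intervalIntegral.integral_const_mul,
    ← intervalIntegral.integral_const_mul]
  congr 2 with τ
  ring

theorem continuous_exp_neg_primitive {μ : ℝ → ℝ} (hμ : Continuous μ) :
    Continuous fun a => Real.exp (-∫ h in (0:ℝ)..a, μ h) :=
  (intervalIntegral.continuous_primitive (fun _ _ => hμ.intervalIntegrable _ _) 0).neg.rexp

section BirthIntegrand

variable {surv f : ℝ → ℝ} (hsurv : Continuous surv) (hsurv_pos : ∀ a, 0 < surv a)
  (hf : Continuous f) (hfsupp : HasCompactSupport f)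
include hsurv hsurv_pos hf

theorem continuous_uncurry_immigrationIntegrand {ν : ℝ × ℝ → ℝ} (hν : Continuous ν) (t : ℝ) :
    Continuous (Function.uncurry fun a τ => f a * (surv a / surv τ) * ν (τ + t - a, τ)) := by
  fun_prop (disch := exact fun _ => (hsurv_pos _).ne')

include hfsupp

theorem integrable_immigrationIntegral {ν : ℝ × ℝ → ℝ} (hν : Continuous ν) (t : ℝ) :
    Integrable fun a => ∫ τ in (a - t)..a, f a * (surv a / surv τ) * ν (τ + t - a, τ) := by
  refine Continuous.integrable_of_hasCompactSupport ?_ (hfsupp.mono fun a ha hfa => ha ?_)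
  · exact intervalIntegral.continuous_parametric_intervalIntegral_of_continuous_of_continuous
      (continuous_uncurry_immigrationIntegrand hsurv hsurv_pos hf hν t) (by fun_prop) (by fun_prop)
  · simp [hfa]

theorem integrable_initialIntegrand {n₀ : ℝ → ℝ} (hn₀ : Continuous n₀) (t : ℝ) :
    Integrable fun a => f a * (surv a / surv (a - t)) * n₀ (a - t) := by
  refine Continuous.integrable_of_hasCompactSupport ?_ (hfsupp.mono fun a ha hfa => ha ?_)
  · fun_prop (disch := exact fun _ => (hsurv_pos _).ne')
  · simp [hfa]

end BirthIntegrand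

theorem birth_function_volterra_general
    (μ : ℝ → ℝ) (hμ : Continuous μ)
    (surv : ℝ → ℝ) (hsurv : ∀ a, surv a = Real.exp (-∫ h in (0:ℝ)..a, μ h))
    (f : ℝ → ℝ) (hf : Continuous f)
    (hfsupp : HasCompactSupport f)
    (ν : ℝ × ℝ → ℝ) (hν : Continuous ν)
    (n₀ : ℝ → ℝ) (hn₀ : Continuous n₀)
    (G : ℝ → ℝ) (hG : ContinuousOn G (Set.Ici 0))
    (n : ℝ × ℝ → ℝ)
    (hn : ∀ t a : ℝ, n (t, a) =
      if t ≤ a then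
        surv a * (n₀ (a - t) / surv (a - t) +
          ∫ τ in (a - t)..a, ν (τ + t - a, τ) / surv τ)
      else
        surv a * (G (t - a) + ∫ τ in (0:ℝ)..a, ν (τ + t - a, τ) / surv τ))
    (hGn : ∀ t : ℝ, 0 ≤ t → G t = ∫ a in Set.Ioi (0:ℝ), f a * n (t, a)) :
    ∀ t : ℝ, 0 ≤ t →
      G t = (∫ a in (0:ℝ)..t, G (t - a) * (f a * surv a)) +
        ((∫ a in (0:ℝ)..t, ∫ τ in (0:ℝ)..a,
            f a * (surv a / surv τ) * ν (τ + t - a, τ)) +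
         (∫ a in Set.Ioi t, ∫ τ in (a - t)..a,
            f a * (surv a / surv τ) * ν (τ + t - a, τ)) +
         ∫ a in Set.Ioi t, f a * (surv a / surv (a - t)) * n₀ (a - t)) := by
  intro t ht
  have hsurv_pos (a : ℝ) : 0 < surv a := hsurv a ▸ Real.exp_pos _
  have hsurv_cont : Continuous surv := funext hsurv ▸ continuous_exp_neg_primitive hμ
  -- At `a = t` the two branches of `n` disagree unless `G 0 = n₀ 0`; this point is negligible.
  have h_young : EqOn (fun a => f a * n (t, a)) (fun a => G (t - a) * (f a * surv a) +
      ∫ τ in (0:ℝ)..a, f a * (surv a / surv τ) * ν (τ + t - a, τ)) (Ioo 0 t) := by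
    intro a ha
    simp only [hn t a, if_neg (not_le.mpr ha.2), mul_mul_add_intervalIntegral_div]
    ring
  have h_old : EqOn (fun a => f a * n (t, a)) (fun a =>
      (∫ τ in (a - t)..a, f a * (surv a / surv τ) * ν (τ + t - a, τ)) +
        f a * (surv a / surv (a - t)) * n₀ (a - t)) (Ioi t) := by
    intro a ha
    simp only [hn t a, if_pos (mem_Ioi.mp ha).le, mul_mul_add_intervalIntegral_div]
    ring
  have h_births : IntervalIntegrable (fun a => G (t - a) * (f a * surv a)) volume 0 t :=
    ((hG.comp (by fun_prop) fun a ha => sub_nonneg.mpr (uIcc_of_le ht ▸ ha).2).mul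
      (hf.mul hsurv_cont).continuousOn).intervalIntegrable
  have h_young_immigrants : IntervalIntegrable
      (fun a => ∫ τ in (0:ℝ)..a, f a * (surv a / surv τ) * ν (τ + t - a, τ)) volume 0 t :=
    (intervalIntegral.continuous_parametric_intervalIntegral_of_continuous
      (continuous_uncurry_immigrationIntegrand hsurv_cont hsurv_pos hf hν t)
      continuous_id).intervalIntegrable 0 t
  have h_old_immigrants := integrable_immigrationIntegral hsurv_cont hsurv_pos hf hfsupp hν t
  have h_initial := integrable_initialIntegrand hsurv_cont hsurv_pos hf hfsupp hn₀ t
  rw [hGn t ht, ← intervalIntegral.integral_interval_add_Ioi'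
      ((h_births.add h_young_immigrants).congr_uIoo (uIoo_of_le ht ▸ h_young.symm))
      ((h_old_immigrants.add h_initial).integrableOn.congr_fun h_old.symm measurableSet_Ioi),
    intervalIntegral.integral_congr_Ioo_of_le ht h_young,
    setIntegral_congr_fun measurableSet_Ioi h_old,
    intervalIntegral.integral_add h_births h_young_immigrants,
    integral_add h_old_immigrants.integrableOn h_initial.integrableOn]
  ring

/-- The birth function G(t) = ∫₀^∞ f(a) n(t,a) da, where n is the
method-of-characteristics solution, satisfies the Volterra integral equation
G(t) = ∫₀ᵗ G(t−a) K(a) da + H(t) with kernel K(a) = f(a) π(a) and non-homogeneous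
term H determined by the initial population and the immigration rate. -/
theorem birth_function_volterra
    (μ : ℝ → ℝ) (hμ : Continuous μ) (hμ0 : ∀ a : ℝ, 0 ≤ a → 0 ≤ μ a)
    (surv : ℝ → ℝ) (hsurv : ∀ a, surv a = Real.exp (-∫ h in (0:ℝ)..a, μ h))
    (f : ℝ → ℝ) (hf : Continuous f) (hf0 : ∀ a, 0 ≤ f a)
    (hfsupp : HasCompactSupport f) (hfsupp' : tsupport f ⊆ Set.Ici 0)
    (ν : ℝ × ℝ → ℝ) (hν : Continuous ν) (hνsupp : HasCompactSupport ν)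
    (n₀ : ℝ → ℝ) (hn₀ : Continuous n₀)
    (hn₀supp : HasCompactSupport n₀) (hn₀supp' : tsupport n₀ ⊆ Set.Ici 0)
    (G : ℝ → ℝ) (hG : ContinuousOn G (Set.Ici 0))
    (n : ℝ × ℝ → ℝ)
    (hn : ∀ t a : ℝ, n (t, a) =
      if t ≤ a then
        surv a * (n₀ (a - t) / surv (a - t) +
          ∫ τ in (a - t)..a, ν (τ + t - a, τ) / surv τ)
      else
        surv a * (G (t - a) + ∫ τ in (0:ℝ)..a, ν (τ + t - a, τ) / surv τ))
    (hGn : ∀ t : ℝ, 0 ≤ t → G t = ∫ a in Set.Ioi (0:ℝ), f a * n (t, a)) :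
    ∀ t : ℝ, 0 ≤ t →
      G t = (∫ a in (0:ℝ)..t, G (t - a) * (f a * surv a)) +
        ((∫ a in (0:ℝ)..t, ∫ τ in (0:ℝ)..a,
            f a * (surv a / surv τ) * ν (τ + t - a, τ)) +
         (∫ a in Set.Ioi t, ∫ τ in (a - t)..a,
            f a * (surv a / surv τ) * ν (τ + t - a, τ)) +
         ∫ a in Set.Ioi t, f a * (surv a / surv (a - t)) * n₀ (a - t)) :=
  birth_function_volterra_general μ hμ surv hsurv f hf hfsupp ν hν n₀ hn₀ G hG n hn hGn
end
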